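/- arXiv:1810.01372 — 7 statements merged into one kernel-verified Lean document; each statement's English description precedes it below -/
import Mathlib

section
/- For every endowment vector x ∈ ℝⁿ₊, the clearing map Ψ_x has a greatest fixed point and a least fixed point in ℝⁿ, and every fixed point V = Ψ_x(V) satisfies −p̄ ≤ V ≤ x + Πᵀ p̄ − p̄ (componentwise). -/
open Matrix BigOperators

noncomputable section

/-- Total liabilities `p̄_i = Σ_{j=1}^{n+1} L_{ij}`. -/
def pbar {n : ℕ} (L : Matrix (Fin n) (Fin (n + 1)) ℝ) (i : Fin n) : ℝ :=
  ∑ j, L i j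

/-- Relative liabilities `π_{ij} = L_{ij} / p̄_i` if `p̄_i > 0`, else `0`. -/
def relLiab {n : ℕ} (L : Matrix (Fin n) (Fin (n + 1)) ℝ) (i j : Fin n) : ℝ :=
  if 0 < pbar L i then L i j.castSucc / pbar L i else 0

/-- The clearing map in wealths `Ψ_x`. -/
def Psi {n : ℕ} (L : Matrix (Fin n) (Fin (n + 1)) ℝ) (αx αL : ℝ)
    (x V : Fin n → ℝ) (i : Fin n) : ℝ :=
  if 0 ≤ V i then
    x i + ∑ j, relLiab L j i * max (pbar L j - max (-(V j)) 0) 0 - pbar L i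
  else
    αx * x i + αL * ∑ j, relLiab L j i * max (pbar L j - max (-(V j)) 0) 0 - pbar L i

/-- For every endowment vector `x ∈ ℝⁿ₊`, the clearing map `Ψ_x` has a greatest fixed point
and a least fixed point in `ℝⁿ`, and every fixed point `V = Ψ_x(V)` satisfies
`−p̄ ≤ V ≤ x + Πᵀ p̄ − p̄` componentwise. -/
theorem clearing_exists_greatest_least (n : ℕ) (hn : 1 ≤ n)
    (L : Matrix (Fin n) (Fin (n + 1)) ℝ)
    (hL : ∀ i j, 0 ≤ L i j) (hLdiag : ∀ i : Fin n, L i i.castSucc = 0)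
    (αx αL : ℝ) (hαx : αx ∈ Set.Icc (0 : ℝ) 1) (hαL : αL ∈ Set.Icc (0 : ℝ) 1)
    (x : Fin n → ℝ) (hx : ∀ i, 0 ≤ x i) :
    (∃ Vmax : Fin n → ℝ, IsGreatest {V | Psi L αx αL x V = V} Vmax) ∧
    (∃ Vmin : Fin n → ℝ, IsLeast {V | Psi L αx αL x V = V} Vmin) ∧
    (∀ V : Fin n → ℝ, Psi L αx αL x V = V →
      ∀ i, -(pbar L i) ≤ V i ∧ V i ≤ x i + (∑ j, relLiab L j i * pbar L j) - pbar L i) := by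
  obtain ⟨hαx0, hαx1⟩ := hαx
  obtain ⟨hαL0, hαL1⟩ := hαL
  have hpb : ∀ i, 0 ≤ pbar L i := fun i => Finset.sum_nonneg fun j _ => hL i j
  have hrel : ∀ i j, 0 ≤ relLiab L i j := by
    intro i j
    unfold relLiab
    split
    · exact div_nonneg (hL _ _) (le_of_lt ‹_›)
    · exact le_rfl
  have hSnn : ∀ (V : Fin n → ℝ) (i : Fin n),
      0 ≤ ∑ j, relLiab L j i * max (pbar L j - max (-(V j)) 0) 0 :=
    fun V i => Finset.sum_nonneg fun j _ => mul_nonneg (hrel j i) (le_max_right _ _)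
  have hSle : ∀ (V : Fin n → ℝ) (i : Fin n),
      (∑ j, relLiab L j i * max (pbar L j - max (-(V j)) 0) 0) ≤
        ∑ j, relLiab L j i * pbar L j := by
    intro V i
    refine Finset.sum_le_sum fun j _ => ?_
    refine mul_le_mul_of_nonneg_left ?_ (hrel j i)
    exact max_le (sub_le_self _ (le_max_right _ _)) (hpb j)
  -- bounds
  have hbound : ∀ (V : Fin n → ℝ) (i : Fin n),
      -(pbar L i) ≤ Psi L αx αL x V i ∧
        Psi L αx αL x V i ≤ x i + (∑ j, relLiab L j i * pbar L j) - pbar L i := by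
    intro V i
    have h1 := hSnn V i
    have h2 := hSle V i
    have h3 := hx i
    unfold Psi
    split
    · constructor <;> nlinarith
    · constructor <;> nlinarith
  -- monotonicity
  have hmono : Monotone (Psi L αx αL x) := by
    intro V W hVW
    have hS : ∀ i : Fin n,
        (∑ j, relLiab L j i * max (pbar L j - max (-(V j)) 0) 0) ≤
          ∑ j, relLiab L j i * max (pbar L j - max (-(W j)) 0) 0 := by
      intro i
      refine Finset.sum_le_sum fun j _ => ?_
      refine mul_le_mul_of_nonneg_left (max_le_max ?_ le_rfl) (hrel j i)
      exact sub_le_sub_left (max_le_max (neg_le_neg (hVW j)) le_rfl) _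
    intro i
    have h1 := hSnn V i
    have h2 := hS i
    have h3 := hx i
    unfold Psi
    by_cases hVi : 0 ≤ V i
    · have hWi : 0 ≤ W i := le_trans hVi (hVW i)
      simp only [if_pos hVi, if_pos hWi]
      linarith
    · simp only [if_neg hVi]
      by_cases hWi : 0 ≤ W i
      · simp only [if_pos hWi]
        nlinarith
      · simp only [if_neg hWi]
        nlinarith
  -- set up the complete lattice on the box
  set lo : Fin n → ℝ := fun i => -(pbar L i) with hlo
  set hi : Fin n → ℝ := fun i => x i + (∑ j, relLiab L j i * pbar L j) - pbar L i with hhi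
  have hmem : ∀ V : Fin n → ℝ, Psi L αx αL x V ∈ Set.Icc lo hi := by
    intro V
    constructor
    · intro i; exact (hbound V i).1
    · intro i; exact (hbound V i).2
  have hlohi : lo ≤ hi := by
    intro i
    have := hpb i
    have := hx i
    have : 0 ≤ ∑ j, relLiab L j i * pbar L j :=
      Finset.sum_nonneg fun j _ => mul_nonneg (hrel j i) (hpb j)
    simp only [hlo, hhi]
    linarith [hx i]
  haveI : Fact (lo ≤ hi) := ⟨hlohi⟩
  let f : Set.Icc lo hi →o Set.Icc lo hi :=
    ⟨fun V => ⟨Psi L αx αL x V, hmem V⟩, fun V W h => hmono h⟩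
  have hfixmem : ∀ V : Fin n → ℝ, Psi L αx αL x V = V → V ∈ Set.Icc lo hi := by
    intro V hV
    rw [← hV]; exact hmem V
  refine ⟨⟨(OrderHom.gfp f : Set.Icc lo hi), ?_, ?_⟩,
      ⟨(OrderHom.lfp f : Set.Icc lo hi), ?_, ?_⟩, ?_⟩
  · have := f.map_gfp
    exact congrArg Subtype.val this
  · intro V hV
    have hVmem := hfixmem V hV
    have : (⟨V, hVmem⟩ : Set.Icc lo hi) ≤ OrderHom.gfp f :=
      f.le_gfp (le_of_eq (Subtype.ext hV.symm))
    exact this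
  · have := f.map_lfp
    exact congrArg Subtype.val this
  · intro V hV
    have hVmem := hfixmem V hV
    have : OrderHom.lfp f ≤ (⟨V, hVmem⟩ : Set.Icc lo hi) :=
      f.lfp_le (le_of_eq (Subtype.ext hV))
    exact this
  · intro V hV i
    have := hbound V i
    rw [hV] at this
    exact this
end
end

section
/- Suppose α_x = α_L = 1 and the regularity assumption holds (p̄_i > 0 and Σ_{j=1}^n π_{ij} < 1 for every i ≤ n). Then for every endowment vector x ∈ ℝⁿ₊ the clearing map Ψ_x has a unique fixed point in ℝⁿ. -/
/-!
With full recovery `α_x = α_L = 1` the indicator in `Ψ_x` disappears: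
`Ψ_x(V)_i = x_i - p̄_i + Σ_j π_{ji} (p̄_j - V_j⁻)⁺`. Each payment `v ↦ (p̄_j - v⁻)⁺` is
1-Lipschitz, so in the `ℓ¹` norm `Ψ_x` is Lipschitz with constant `max_j Σ_i π_{ji}`, which is
`< 1` by regularity. Banach's fixed point theorem on the complete space `ℓ¹(Fin n)` concludes.
-/

open Matrix BigOperators

noncomputable section

open scoped NNReal

theorem exists_nnreal_lt_one_forall_le {ι : Type*} [Fintype ι] {s : ι → ℝ}
    (hs : ∀ i, s i < 1) : ∃ c : ℝ≥0, c < 1 ∧ ∀ i, s i ≤ c := by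
  classical
  refine ⟨Finset.univ.sup fun i => (s i).toNNReal, ?_, fun i => ?_⟩
  · exact (Finset.sup_lt_iff zero_lt_one).2 fun i _ => Real.toNNReal_lt_one.2 (hs i)
  · calc s i ≤ (s i).toNNReal := Real.le_coe_toNNReal _
      _ ≤ _ := NNReal.coe_le_coe.2 (Finset.le_sup (f := fun i => (s i).toNNReal)
          (Finset.mem_univ i))

theorem lipschitzWith_one_max_sub_negPart (a : ℝ) :
    LipschitzWith 1 fun v : ℝ => max (a - max (-v) 0) 0 := by
  refine LipschitzWith.of_dist_le_mul fun v w => ?_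
  rw [NNReal.coe_one, one_mul, Real.dist_eq, Real.dist_eq]
  calc |max (a - max (-v) 0) 0 - max (a - max (-w) 0) 0|
      ≤ |(a - max (-v) 0) - (a - max (-w) 0)| := abs_max_sub_max_le_abs _ _ _
    _ = |max (-w) 0 - max (-v) 0| := by ring_nf
    _ ≤ |-w - -v| := abs_max_sub_max_le_abs _ _ _
    _ = |v - w| := by ring_nf

theorem lipschitzWith_L1_add_sum_mul {ι : Type*} [Fintype ι] {A : ι → ι → ℝ}
    (hA : ∀ i j, 0 ≤ A i j) {c : ℝ≥0} (hc : ∀ j, ∑ i, A j i ≤ c) {g : ι → ℝ → ℝ}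
    (hg : ∀ j, LipschitzWith 1 (g j)) (b : ι → ℝ) :
    LipschitzWith c fun V : PiLp 1 (fun _ : ι => ℝ) =>
      WithLp.toLp 1 fun i => b i + ∑ j, A j i * g j (V j) := by
  refine LipschitzWith.of_dist_le_mul fun V W => ?_
  simp only [PiLp.dist_eq_of_L1, Real.dist_eq, add_sub_add_left_eq_sub,
    ← Finset.sum_sub_distrib, ← mul_sub]
  calc ∑ i, |∑ j, A j i * (g j (V j) - g j (W j))|
      ≤ ∑ i, ∑ j, A j i * |V j - W j| := by
        refine Finset.sum_le_sum fun i _ => (Finset.abs_sum_le_sum_abs _ _).trans ?_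
        refine Finset.sum_le_sum fun j _ => ?_
        rw [abs_mul, abs_of_nonneg (hA j i)]
        refine mul_le_mul_of_nonneg_left ?_ (hA j i)
        simpa only [Real.dist_eq, NNReal.coe_one, one_mul] using (hg j).dist_le_mul (V j) (W j)
    _ = ∑ j, (∑ i, A j i) * |V j - W j| := by
        rw [Finset.sum_comm]
        simp only [Finset.sum_mul]
    _ ≤ ∑ j, c * |V j - W j| := by gcongr with j; exact hc j
    _ = c * ∑ j, |V j - W j| := (Finset.mul_sum _ _ _).symm

theorem existsUnique_isFixedPt_of_contractingWith_L1 {ι : Type*} [Fintype ι]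
    {f : (ι → ℝ) → ι → ℝ} {K : ℝ≥0}
    (hf : ContractingWith K fun V : PiLp 1 (fun _ : ι => ℝ) => WithLp.toLp 1 (f V.ofLp)) :
    ∃! V, f V = V :=
  ⟨(ContractingWith.fixedPoint _ hf).ofLp, congrArg WithLp.ofLp hf.fixedPoint_isFixedPt,
    fun _ hV => congrArg WithLp.ofLp (hf.fixedPoint_unique (congrArg (WithLp.toLp 1) hV))⟩

theorem relLiab_nonneg {n : ℕ} {L : Matrix (Fin n) (Fin (n + 1)) ℝ} (hL : ∀ i j, 0 ≤ L i j)
    (i j : Fin n) : 0 ≤ relLiab L i j := by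
  unfold relLiab
  split_ifs with h
  · exact div_nonneg (hL _ _) h.le
  · exact le_rfl

theorem Psi_one_one {n : ℕ} (L : Matrix (Fin n) (Fin (n + 1)) ℝ) (x V : Fin n → ℝ) :
    Psi L 1 1 x V =
      fun i => (x i - pbar L i) + ∑ j, relLiab L j i * max (pbar L j - max (-(V j)) 0) 0 := by
  funext i
  unfold Psi
  split_ifs <;> ring

theorem clearing_unique_general (n : ℕ)
    (L : Matrix (Fin n) (Fin (n + 1)) ℝ)
    (hL : ∀ i j, 0 ≤ L i j)
    (αx αL : ℝ) (hαx : αx = 1) (hαL : αL = 1)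
    (hreg : ∀ i, 0 < pbar L i ∧ ∑ j, relLiab L i j < 1)
    (x : Fin n → ℝ) :
    ∃! V : Fin n → ℝ, Psi L αx αL x V = V := by
  subst hαx hαL
  obtain ⟨c, hc1, hc⟩ := exists_nnreal_lt_one_forall_le fun i => (hreg i).2
  refine existsUnique_isFixedPt_of_contractingWith_L1 (K := c) ⟨hc1, ?_⟩
  simpa only [Psi_one_one] using lipschitzWith_L1_add_sum_mul (relLiab_nonneg hL) hc
    (fun j => lipschitzWith_one_max_sub_negPart (pbar L j)) fun i => x i - pbar L i

/-- If `α_x = α_L = 1` and the regularity assumption holds (`p̄_i > 0` and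
`Σ_{j=1}^n π_{ij} < 1` for every bank `i`), then for every endowment vector `x ∈ ℝⁿ₊`
the clearing map `Ψ_x` has a unique fixed point in `ℝⁿ`. -/
theorem clearing_unique (n : ℕ) (hn : 1 ≤ n)
    (L : Matrix (Fin n) (Fin (n + 1)) ℝ)
    (hL : ∀ i j, 0 ≤ L i j) (hLdiag : ∀ i : Fin n, L i i.castSucc = 0)
    (αx αL : ℝ) (hαx : αx = 1) (hαL : αL = 1)
    (hreg : ∀ i, 0 < pbar L i ∧ ∑ j, relLiab L i j < 1)
    (x : Fin n → ℝ) (hx : ∀ i, 0 ≤ x i) :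
    ∃! V : Fin n → ℝ, Psi L αx αL x V = V :=
  clearing_unique_general n L hL αx αL hαx hαL hreg x
end
end

section
/- For every endowment vector x ∈ ℝⁿ₊, the greatest fixed point V↑ of the clearing map Ψ_x is also a fixed point of the alternative clearing map Ψ*_x, and V↑ is the greatest real-valued fixed point of Ψ*_x. -/
open Matrix BigOperators

noncomputable section

/-- The alternative clearing map `Ψ*_x`. -/
def PsiStar {n : ℕ} (L : Matrix (Fin n) (Fin (n + 1)) ℝ) (αx αL : ℝ)
    (x V : Fin n → ℝ) (i : Fin n) : ℝ :=
  (if 0 ≤ V i then 1 else αx) * x i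
    + (if 0 ≤ V i then 1 else αL) * ∑ j, relLiab L j i * (pbar L j - max (-(V j)) 0)
    - pbar L i

namespace ClearingAux

variable {n : ℕ} {L : Matrix (Fin n) (Fin (n + 1)) ℝ}

lemma pbar_nonneg (hL : ∀ i j, 0 ≤ L i j) (i : Fin n) : 0 ≤ pbar L i :=
  Finset.sum_nonneg fun j _ => hL i j

lemma relLiab_nonneg (hL : ∀ i j, 0 ≤ L i j) (i j : Fin n) : 0 ≤ relLiab L i j := by
  unfold relLiab
  split
  · exact div_nonneg (hL i j.castSucc) (le_of_lt ‹_›)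
  · exact le_refl _

/-- Sum appearing in `Psi`. -/
def S (L : Matrix (Fin n) (Fin (n + 1)) ℝ) (V : Fin n → ℝ) (i : Fin n) : ℝ :=
  ∑ j, relLiab L j i * max (pbar L j - max (-(V j)) 0) 0

lemma S_nonneg (hL : ∀ i j, 0 ≤ L i j) (V : Fin n → ℝ) (i : Fin n) : 0 ≤ S L V i :=
  Finset.sum_nonneg fun j _ => mul_nonneg (relLiab_nonneg hL j i) (le_max_right _ _)

lemma S_mono (hL : ∀ i j, 0 ≤ L i j) {V V' : Fin n → ℝ} (h : V ≤ V') (i : Fin n) :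
    S L V i ≤ S L V' i := by
  refine Finset.sum_le_sum fun j _ => ?_
  refine mul_le_mul_of_nonneg_left ?_ (relLiab_nonneg hL j i)
  exact max_le_max (sub_le_sub_left (max_le_max (neg_le_neg (h j)) le_rfl) _) le_rfl

lemma S_le (hL : ∀ i j, 0 ≤ L i j) (V : Fin n → ℝ) (i : Fin n) :
    S L V i ≤ ∑ j, relLiab L j i * pbar L j := by
  refine Finset.sum_le_sum fun j _ => ?_
  refine mul_le_mul_of_nonneg_left ?_ (relLiab_nonneg hL j i)
  exact max_le (sub_le_self _ (le_max_right _ _)) (pbar_nonneg hL j)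

lemma Psi_eq (αx αL : ℝ) (x V : Fin n → ℝ) (i : Fin n) :
    Psi L αx αL x V i =
      (if 0 ≤ V i then 1 else αx) * x i + (if 0 ≤ V i then 1 else αL) * S L V i
        - pbar L i := by
  unfold Psi S
  split <;> ring

lemma Psi_mono (hL : ∀ i j, 0 ≤ L i j) {αx αL : ℝ}
    (hαx : αx ∈ Set.Icc (0 : ℝ) 1) (hαL : αL ∈ Set.Icc (0 : ℝ) 1)
    {x : Fin n → ℝ} (hx : ∀ i, 0 ≤ x i) {V V' : Fin n → ℝ} (h : V ≤ V') :
    Psi L αx αL x V ≤ Psi L αx αL x V' := by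
  intro i
  rw [Psi_eq, Psi_eq]
  have hS := S_mono hL h i
  have hS0 := S_nonneg hL V i
  by_cases h1 : 0 ≤ V i
  · rw [if_pos h1, if_pos h1, if_pos (le_trans h1 (h i)), if_pos (le_trans h1 (h i))]
    nlinarith
  · rw [if_neg h1, if_neg h1]
    by_cases h2 : 0 ≤ V' i
    · rw [if_pos h2, if_pos h2]
      nlinarith [hαx.1, hαx.2, hαL.1, hαL.2, hx i]
    · rw [if_neg h2, if_neg h2]
      nlinarith [hαL.1]

lemma Psi_le_bound (hL : ∀ i j, 0 ≤ L i j) {αx αL : ℝ}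
    (hαx : αx ∈ Set.Icc (0 : ℝ) 1) (hαL : αL ∈ Set.Icc (0 : ℝ) 1)
    {x : Fin n → ℝ} (hx : ∀ i, 0 ≤ x i) (V : Fin n → ℝ) (i : Fin n) :
    Psi L αx αL x V i ≤ x i + (∑ j, relLiab L j i * pbar L j) - pbar L i := by
  rw [Psi_eq]
  have h1 := S_le hL V i
  have h0 := S_nonneg hL V i
  split
  · nlinarith
  · nlinarith [hαx.1, hαx.2, hαL.1, hαL.2, hx i]

lemma fixed_lower (hL : ∀ i j, 0 ≤ L i j) {αx αL : ℝ}
    (hαx : αx ∈ Set.Icc (0 : ℝ) 1) (hαL : αL ∈ Set.Icc (0 : ℝ) 1)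
    {x : Fin n → ℝ} (hx : ∀ i, 0 ≤ x i) {V : Fin n → ℝ}
    (hV : Psi L αx αL x V = V) (i : Fin n) : max (-(V i)) 0 ≤ pbar L i := by
  have hVi : Psi L αx αL x V i = V i := congrFun hV i
  rw [Psi_eq] at hVi
  have h0 := S_nonneg hL V i
  have hp := pbar_nonneg hL i
  by_cases h1 : 0 ≤ V i
  · exact max_le (by linarith) hp
  · rw [if_neg h1, if_neg h1] at hVi
    have : 0 ≤ αx * x i + αL * S L V i := by
      have := mul_nonneg hαx.1 (hx i)
      have := mul_nonneg hαL.1 h0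
      linarith
    exact max_le (by linarith) (pbar_nonneg hL i)

lemma PsiStar_eq_Psi_of_fixed (hL : ∀ i j, 0 ≤ L i j) {αx αL : ℝ}
    (hαx : αx ∈ Set.Icc (0 : ℝ) 1) (hαL : αL ∈ Set.Icc (0 : ℝ) 1)
    {x : Fin n → ℝ} (hx : ∀ i, 0 ≤ x i) {V : Fin n → ℝ}
    (hV : Psi L αx αL x V = V) : PsiStar L αx αL x V = V := by
  funext i
  have hsum : (∑ j, relLiab L j i * (pbar L j - max (-(V j)) 0)) = S L V i := by
    refine Finset.sum_congr rfl fun j _ => ?_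
    rw [max_eq_left (sub_nonneg.2 (fixed_lower hL hαx hαL hx hV j))]
  have hVi : Psi L αx αL x V i = V i := congrFun hV i
  rw [Psi_eq] at hVi
  unfold PsiStar
  rw [hsum]
  exact hVi

lemma PsiStar_le_Psi (hL : ∀ i j, 0 ≤ L i j) {αx αL : ℝ}
    (hαx : αx ∈ Set.Icc (0 : ℝ) 1) (hαL : αL ∈ Set.Icc (0 : ℝ) 1)
    (x V : Fin n → ℝ) : PsiStar L αx αL x V ≤ Psi L αx αL x V := by
  intro i
  rw [Psi_eq]
  unfold PsiStar
  have hsum : (∑ j, relLiab L j i * (pbar L j - max (-(V j)) 0)) ≤ S L V i := by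
    refine Finset.sum_le_sum fun j _ => ?_
    exact mul_le_mul_of_nonneg_left (le_max_left _ _) (relLiab_nonneg hL j i)
  have hc : (0 : ℝ) ≤ if 0 ≤ V i then 1 else αL := by
    split
    · norm_num
    · exact hαL.1
  have := mul_le_mul_of_nonneg_left hsum hc
  linarith

end ClearingAux

open ClearingAux in
/-- For every endowment vector `x ∈ ℝⁿ₊`, the greatest fixed point `V↑` of the clearing map
`Ψ_x` is also a fixed point of the alternative clearing map `Ψ*_x`, and `V↑` is the greatest
real-valued fixed point of `Ψ*_x`. -/
theorem greatest_fixed_point_PsiStar (n : ℕ) (hn : 1 ≤ n)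
    (L : Matrix (Fin n) (Fin (n + 1)) ℝ)
    (hL : ∀ i j, 0 ≤ L i j) (hLdiag : ∀ i : Fin n, L i i.castSucc = 0)
    (αx αL : ℝ) (hαx : αx ∈ Set.Icc (0 : ℝ) 1) (hαL : αL ∈ Set.Icc (0 : ℝ) 1)
    (x : Fin n → ℝ) (hx : ∀ i, 0 ≤ x i)
    (Vup : Fin n → ℝ) (hVup : IsGreatest {V | Psi L αx αL x V = V} Vup) :
    PsiStar L αx αL x Vup = Vup ∧ IsGreatest {V | PsiStar L αx αL x V = V} Vup := by
  obtain ⟨hfix, hub⟩ := hVup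
  have hfix' : Psi L αx αL x Vup = Vup := hfix
  have part1 : PsiStar L αx αL x Vup = Vup :=
    PsiStar_eq_Psi_of_fixed hL hαx hαL hx hfix'
  refine ⟨part1, part1, ?_⟩
  intro W hW
  have hW' : PsiStar L αx αL x W = W := hW
  -- W ≤ Psi W
  have hWle : W ≤ Psi L αx αL x W := by
    calc W = PsiStar L αx αL x W := hW'.symm
      _ ≤ Psi L αx αL x W := PsiStar_le_Psi hL hαx hαL x W
  -- the super-solution U = W ⊔ Vup
  set U : Fin n → ℝ := W ⊔ Vup with hUdef
  have hWU : W ≤ U := le_sup_left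
  have hVupU : Vup ≤ U := le_sup_right
  have hU1 : U ≤ Psi L αx αL x U := by
    refine sup_le ?_ ?_
    · exact le_trans hWle (Psi_mono hL hαx hαL hx hWU)
    · calc Vup = Psi L αx αL x Vup := hfix'.symm
        _ ≤ Psi L αx αL x U := Psi_mono hL hαx hαL hx hVupU
  set B : Fin n → ℝ := fun i => x i + (∑ j, relLiab L j i * pbar L j) - pbar L i with hBdef
  have hB : ∀ V, Psi L αx αL x V ≤ B := fun V i => Psi_le_bound hL hαx hαL hx V i
  have hUB : U ≤ B := le_trans hU1 (hB U)
  haveI : Fact (U ≤ B) := ⟨hUB⟩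
  -- Knaster–Tarski on the complete lattice Icc U B
  let f : Set.Icc U B →o Set.Icc U B :=
    { toFun := fun V => ⟨Psi L αx αL x V.1,
        le_trans hU1 (Psi_mono hL hαx hαL hx V.2.1), hB V.1⟩
      monotone' := fun V V' h => Psi_mono hL hαx hαL hx h }
  let p := OrderHom.lfp f
  have hp : f p = p := OrderHom.map_lfp f
  have hpfix : Psi L αx αL x p.1 = p.1 := congrArg Subtype.val hp
  have hple : (p : Fin n → ℝ) ≤ Vup := hub hpfix
  calc W ≤ U := hWU
    _ ≤ (p : Fin n → ℝ) := p.2.1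
    _ ≤ Vup := hple
end
end

section
/- Let Π ∈ [0,1]^{n×n} be a matrix with Σ_{j=1}^n π_{ij} < 1 for every i ≤ n, let α_L ∈ [0,1], let z ∈ {0,1}ⁿ and Λ = diag(z). Then the matrix I − (I − (1−α_L)Λ) Πᵀ Λ is invertible. -/
open Matrix BigOperators

noncomputable section

attribute [local instance] Matrix.linftyOpNormedRing Matrix.linftyOpNormedAlgebra

/-- Let `Π ∈ [0,1]^{n×n}` with row sums strictly less than 1, `α_L ∈ [0,1]`, `z ∈ {0,1}ⁿ`
and `Λ = diag(z)`.  Then the matrix `I − (I − (1−α_L)Λ) Πᵀ Λ` is invertible. -/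
theorem clearing_matrix_invertible (n : ℕ) (Pi : Matrix (Fin n) (Fin n) ℝ)
    (hPi : ∀ i j, 0 ≤ Pi i j ∧ Pi i j ≤ 1) (hrow : ∀ i, ∑ j, Pi i j < 1)
    (αL : ℝ) (hαL : αL ∈ Set.Icc (0 : ℝ) 1)
    (z : Fin n → ℝ) (hz : ∀ i, z i = 0 ∨ z i = 1) :
    IsUnit ((1 : Matrix (Fin n) (Fin n) ℝ)
      - ((1 : Matrix (Fin n) (Fin n) ℝ) - (1 - αL) • Matrix.diagonal z)
        * Pi.transpose * Matrix.diagonal z) := by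
  set c : ℝ := 1 - αL with hc
  set A : Matrix (Fin n) (Fin n) ℝ :=
    ((1 : Matrix (Fin n) (Fin n) ℝ) - c • Matrix.diagonal z) * Pi.transpose
      * Matrix.diagonal z with hA
  -- entrywise bounds for Aᵀ
  have hzmem : ∀ i, 0 ≤ z i ∧ z i ≤ 1 := by
    intro i; rcases hz i with h | h <;> simp [h]
  have hc01 : 0 ≤ c ∧ c ≤ 1 := by
    obtain ⟨h0, h1⟩ := hαL; constructor <;> [linarith; linarith]
  have hAentry : ∀ i j, Aᵀ i j = z i * Pi i j * (1 - c * z j) := by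
    intro i j
    simp [hA, Matrix.transpose_apply, Matrix.mul_apply, Matrix.one_apply,
      Matrix.diagonal_apply, ite_mul, mul_ite, sub_mul, Finset.sum_sub_distrib,
      Finset.sum_ite_eq, Finset.sum_ite_eq']
    ring
  have hbound : ∀ i j, 0 ≤ Aᵀ i j ∧ Aᵀ i j ≤ Pi i j := by
    intro i j
    rw [hAentry i j]
    obtain ⟨hz0, hz1⟩ := hzmem i
    obtain ⟨hw0, hw1⟩ := hzmem j
    obtain ⟨hP0, _⟩ := hPi i j
    have h1 : 0 ≤ 1 - c * z j := by nlinarith [hc01.1, hc01.2]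
    have h2 : 1 - c * z j ≤ 1 := by nlinarith [hc01.1]
    constructor
    · positivity
    · nlinarith [mul_nonneg (by linarith : (0:ℝ) ≤ 1 - z i) hP0,
        mul_nonneg (mul_nonneg hz0 hP0) (mul_nonneg hc01.1 hw0)]
  have key : ∀ i, (∑ j, ‖Aᵀ i j‖₊ : NNReal) < 1 := by
    intro i
    rw [← NNReal.coe_lt_coe]
    push_cast
    calc ∑ j, (‖Aᵀ i j‖₊ : ℝ) = ∑ j, Aᵀ i j := by
          refine Finset.sum_congr rfl fun j _ => ?_
          rw [coe_nnnorm, Real.norm_eq_abs, abs_of_nonneg (hbound i j).1]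
      _ ≤ ∑ j, Pi i j := Finset.sum_le_sum fun j _ => (hbound i j).2
      _ < 1 := hrow i
  have hnorm : ‖Aᵀ‖ < 1 := by
    rw [Matrix.linfty_opNorm_def]
    rw [show (1:ℝ) = ((1:NNReal):ℝ) from rfl, NNReal.coe_lt_coe]
    exact Finset.sup_lt_iff (by norm_num) |>.2 fun i _ => key i
  have hT : IsUnit ((1 : Matrix (Fin n) (Fin n) ℝ) - Aᵀ) := (Units.oneSub Aᵀ hnorm).isUnit
  have : (1 : Matrix (Fin n) (Fin n) ℝ) - Aᵀ = ((1 : Matrix (Fin n) (Fin n) ℝ) - A)ᵀ := by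
    simp [Matrix.transpose_sub]
  rw [this, Matrix.isUnit_iff_isUnit_det, Matrix.det_transpose,
    ← Matrix.isUnit_iff_isUnit_det] at hT
  exact hT
end
end

section
/- Assume the regularity assumption (p̄_i > 0 and Σ_{j=1}^n π_{ij} < 1 for every i ≤ n) and fix an endowment vector x ∈ ℝⁿ₊. Define the fictitious default sequence by V⁽⁰⁾ = x + Πᵀ p̄ − p̄, and for k ≥ 1: z⁽ᵏ⁾ = 1_{V⁽ᵏ⁻¹⁾ < 0} ∈ {0,1}ⁿ, Λ_k = diag(z⁽ᵏ⁾), and V⁽ᵏ⁾ = (I − (I − (1−α_L)Λ_k)Πᵀ Λ_k)⁻¹ [(I − (1−α_x)Λ_k)x + (I − (1−α_L)Λ_k)Πᵀ p̄ − p̄]. Then there exists k ≤ n+1 such that z⁽ᵏ⁾ = z⁽ᵏ⁻¹⁾ (with z⁽⁰⁾ = 0), and for the first such k, V⁽ᵏ⁻¹⁾ equals the greatest fixed point V↑ of the clearing map Ψ_x. -/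
open Matrix BigOperators

noncomputable section

/-- The interbank relative liabilities matrix `Π`. -/
def PiMat {n : ℕ} (L : Matrix (Fin n) (Fin (n + 1)) ℝ) : Matrix (Fin n) (Fin n) ℝ :=
  Matrix.of fun i j => relLiab L i j

/-- The matrix `I − (I − (1−α_L)Λ) Πᵀ Λ` where `Λ = diag(z)`. -/
def Amat {n : ℕ} (L : Matrix (Fin n) (Fin (n + 1)) ℝ) (αL : ℝ) (z : Fin n → ℝ) :
    Matrix (Fin n) (Fin n) ℝ :=
  1 - ((1 : Matrix (Fin n) (Fin n) ℝ) - (1 - αL) • Matrix.diagonal z)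
        * (PiMat L)ᵀ * Matrix.diagonal z

namespace FDA
variable {n : ℕ}

lemma sub_mulVec_apply (M : Matrix (Fin n) (Fin n) ℝ) (y : Fin n → ℝ) (i : Fin n) :
    ((1 - M) *ᵥ y) i = y i - ∑ j, M i j * y j := by
  simp only [Matrix.mulVec, dotProduct, Matrix.sub_apply, Matrix.one_apply, sub_mul,
    ite_mul, one_mul, zero_mul, Finset.sum_sub_distrib, Finset.sum_ite_eq, Finset.mem_univ,
    if_pos]

lemma maxPrin (M : Matrix (Fin n) (Fin n) ℝ) (hM : ∀ i j, 0 ≤ M i j)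
    (hrow : ∀ i, ∑ j, M i j < 1) (y : Fin n → ℝ)
    (hy : ∀ i, 0 ≤ ((1 - M) *ᵥ y) i) (i : Fin n) : 0 ≤ y i := by
  obtain ⟨i₀, -, hmin⟩ := Finset.exists_min_image Finset.univ y ⟨i, Finset.mem_univ i⟩
  have hmin' : ∀ j, y i₀ ≤ y j := fun j => hmin j (Finset.mem_univ j)
  suffices h : 0 ≤ y i₀ from le_trans h (hmin' i)
  by_contra hneg
  push_neg at hneg
  have h1 := hy i₀
  rw [sub_mulVec_apply] at h1
  have h2 : (∑ j, M i₀ j) * y i₀ ≤ ∑ j, M i₀ j * y j := by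
    rw [Finset.sum_mul]
    exact Finset.sum_le_sum fun j _ => mul_le_mul_of_nonneg_left (hmin' j) (hM i₀ j)
  nlinarith [hrow i₀, mul_pos (sub_pos.mpr (hrow i₀)) (neg_pos.mpr hneg)]

lemma isUnit_oneSub (M : Matrix (Fin n) (Fin n) ℝ) (hM : ∀ i j, 0 ≤ M i j)
    (hrow : ∀ i, ∑ j, M i j < 1) : IsUnit (1 - M).det := by
  rw [isUnit_iff_ne_zero]
  intro hdet
  obtain ⟨v, hv, hv0⟩ := (Matrix.exists_mulVec_eq_zero_iff).mpr hdet
  refine hv (funext fun i => ?_)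
  have h1 : ∀ i, 0 ≤ v i := fun i => maxPrin M hM hrow v (by simp [hv0]) i
  have h2 : ∀ i, 0 ≤ (-v) i := fun i => maxPrin M hM hrow (-v) (by simp [Matrix.mulVec_neg, hv0]) i
  have := h2 i
  simp only [Pi.neg_apply, neg_nonneg] at this
  exact le_antisymm this (h1 i)

lemma inv_oneSub_nonneg (M : Matrix (Fin n) (Fin n) ℝ) (hM : ∀ i j, 0 ≤ M i j)
    (hrow : ∀ i, ∑ j, M i j < 1) (i j : Fin n) : 0 ≤ (1 - M)⁻¹ i j := by
  have hu := isUnit_oneSub M hM hrow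
  refine maxPrin M hM hrow (fun k => (1 - M)⁻¹ k j) (fun k => ?_) i
  have hmul : ((1 - M) *ᵥ fun l => (1 - M)⁻¹ l j) k = ((1 - M) * (1 - M)⁻¹) k j := by
    simp [Matrix.mulVec, dotProduct, Matrix.mul_apply]
  rw [hmul, Matrix.mul_nonsing_inv _ hu, Matrix.one_apply]
  split <;> norm_num


lemma mulVec_entry_nonneg (A : Matrix (Fin n) (Fin n) ℝ) (hA : ∀ i j, 0 ≤ A i j)
    (w : Fin n → ℝ) (hw : ∀ i, 0 ≤ w i) (i : Fin n) : 0 ≤ (A *ᵥ w) i := by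
  simp only [Matrix.mulVec, dotProduct]
  exact Finset.sum_nonneg fun j _ => mul_nonneg (hA i j) (hw j)

lemma sol_le (A : Matrix (Fin n) (Fin n) ℝ) (hu : IsUnit A.det)
    (hinv : ∀ i j, 0 ≤ A⁻¹ i j) (u w : Fin n → ℝ)
    (h : ∀ i, (A *ᵥ u) i ≤ (A *ᵥ w) i) (i : Fin n) : u i ≤ w i := by
  have key : w - u = A⁻¹ *ᵥ (A *ᵥ (w - u)) := by
    rw [Matrix.mulVec_mulVec, Matrix.nonsing_inv_mul _ hu, Matrix.one_mulVec]
  have h2 : 0 ≤ (w - u) i := by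
    rw [key]
    refine mulVec_entry_nonneg _ hinv _ (fun l => ?_) i
    rw [Matrix.mulVec_sub]
    simpa using sub_nonneg.mpr (h l)
  simpa [sub_nonneg] using h2

lemma diag_eq (c : ℝ) (z : Fin n → ℝ) :
    (1 : Matrix (Fin n) (Fin n) ℝ) - c • Matrix.diagonal z
      = Matrix.diagonal (fun i => 1 - c * z i) := by
  ext a b
  by_cases h : a = b <;>
    simp [Matrix.diagonal_apply, Matrix.one_apply, h, Matrix.sub_apply]

lemma Amat_apply (L : Matrix (Fin n) (Fin (n + 1)) ℝ) (αL : ℝ) (z : Fin n → ℝ) (i j : Fin n) :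
    Amat L αL z i j
      = (if i = j then 1 else 0) - (1 - (1 - αL) * z i) * relLiab L j i * z j := by
  rw [Amat, diag_eq]
  rw [Matrix.sub_apply, Matrix.mul_diagonal, Matrix.diagonal_mul]
  simp only [Matrix.one_apply, PiMat, Matrix.transpose_apply, Matrix.of_apply]

lemma Amat_mulVec (L : Matrix (Fin n) (Fin (n + 1)) ℝ) (αL : ℝ) (z V : Fin n → ℝ) (i : Fin n) :
    (Amat L αL z *ᵥ V) i
      = V i - (1 - (1 - αL) * z i) * ∑ j, relLiab L j i * (z j * V j) := by
  simp only [Matrix.mulVec, dotProduct, Amat_apply, sub_mul, ite_mul, one_mul, zero_mul,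
    Finset.sum_sub_distrib, Finset.sum_ite_eq, Finset.mem_univ, if_pos, Finset.mul_sum]
  simp only [mul_assoc]


/-- The affine map form of the clearing relation. -/
def Fmap (L : Matrix (Fin n) (Fin (n + 1)) ℝ) (αx αL : ℝ) (x z V : Fin n → ℝ) (i : Fin n) : ℝ :=
  (1 - (1 - αx) * z i) * x i
    + (1 - (1 - αL) * z i) * (∑ j, relLiab L j i * (pbar L j + z j * V j))
    - pbar L i

def bvec (L : Matrix (Fin n) (Fin (n + 1)) ℝ) (αx αL : ℝ) (x z : Fin n → ℝ) : Fin n → ℝ :=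
  (((1 : Matrix (Fin n) (Fin n) ℝ) - (1 - αx) • Matrix.diagonal z) *ᵥ x)
    + (((1 : Matrix (Fin n) (Fin n) ℝ) - (1 - αL) • Matrix.diagonal z)
        *ᵥ ((PiMat L)ᵀ *ᵥ pbar L))
    - pbar L

lemma bvec_apply (L : Matrix (Fin n) (Fin (n + 1)) ℝ) (αx αL : ℝ) (x z : Fin n → ℝ) (i : Fin n) :
    bvec L αx αL x z i
      = (1 - (1 - αx) * z i) * x i
          + (1 - (1 - αL) * z i) * (∑ j, relLiab L j i * pbar L j) - pbar L i := by
  have hdv : ∀ (c : ℝ) (u : Fin n → ℝ),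
      (((1 : Matrix (Fin n) (Fin n) ℝ) - c • Matrix.diagonal z) *ᵥ u) i = (1 - c * z i) * u i := by
    intro c u
    rw [diag_eq]
    simp [Matrix.mulVec, dotProduct, Matrix.diagonal_apply, ite_mul, zero_mul,
      Finset.sum_ite_eq, Finset.mem_univ]
  have hPv : ((PiMat L)ᵀ *ᵥ pbar L) i = ∑ j, relLiab L j i * pbar L j := by
    simp [Matrix.mulVec, dotProduct, PiMat, Matrix.transpose_apply]
  simp only [bvec, Pi.add_apply, Pi.sub_apply, hdv, hPv]

lemma key (L : Matrix (Fin n) (Fin (n + 1)) ℝ) (αx αL : ℝ) (x z V : Fin n → ℝ) (i : Fin n) :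
    (Amat L αL z *ᵥ V) i - bvec L αx αL x z i = V i - Fmap L αx αL x z V i := by
  rw [Amat_mulVec, bvec_apply]
  simp only [Fmap]
  have hsplit : (∑ j, relLiab L j i * (pbar L j + z j * V j))
      = (∑ j, relLiab L j i * pbar L j) + ∑ j, relLiab L j i * (z j * V j) := by
    rw [← Finset.sum_add_distrib]
    exact Finset.sum_congr rfl fun j _ => by ring
  rw [hsplit]
  ring

lemma Amat_good (L : Matrix (Fin n) (Fin (n + 1)) ℝ) (αL : ℝ) (hαL : αL ∈ Set.Icc (0 : ℝ) 1)
    (hπ : ∀ i j, 0 ≤ relLiab L i j) (hπrow : ∀ i, ∑ j, relLiab L i j < 1)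
    (z : Fin n → ℝ) (hz : ∀ i, z i = 0 ∨ z i = 1) :
    IsUnit (Amat L αL z).det ∧ ∀ i j, 0 ≤ (Amat L αL z)⁻¹ i j := by
  set M : Matrix (Fin n) (Fin n) ℝ :=
    Matrix.of (fun i j => (1 - (1 - αL) * z j) * relLiab L i j * z i) with hMdef
  have hd : ∀ j, 0 ≤ 1 - (1 - αL) * z j ∧ 1 - (1 - αL) * z j ≤ 1 := by
    intro j; rcases hz j with h | h <;> rw [h] <;> constructor <;> nlinarith [hαL.1, hαL.2]
  have hz01 : ∀ i, 0 ≤ z i ∧ z i ≤ 1 := fun i => by rcases hz i with h | h <;> simp [h]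
  have hM0 : ∀ i j, 0 ≤ M i j := fun i j =>
    mul_nonneg (mul_nonneg (hd j).1 (hπ i j)) (hz01 i).1
  have hMrow : ∀ i, ∑ j, M i j < 1 := by
    intro i
    have hle : ∀ j ∈ Finset.univ, M i j ≤ relLiab L i j := by
      intro j _
      have h1 : (1 - (1 - αL) * z j) * relLiab L i j ≤ relLiab L i j := by
        nlinarith [mul_nonneg (sub_nonneg.mpr (hd j).2) (hπ i j)]
      have h2 : M i j ≤ (1 - (1 - αL) * z j) * relLiab L i j := by
        have := mul_nonneg (mul_nonneg (hd j).1 (hπ i j)) (sub_nonneg.mpr (hz01 i).2)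
        simp only [hMdef, Matrix.of_apply]
        nlinarith
      linarith
    exact lt_of_le_of_lt (Finset.sum_le_sum hle) (hπrow i)
  have hAt : (Amat L αL z)ᵀ = 1 - M := by
    ext i j
    rw [Matrix.transpose_apply, Amat_apply, Matrix.sub_apply, Matrix.one_apply]
    simp only [hMdef, Matrix.of_apply, eq_comm]
  have hdet : IsUnit (Amat L αL z).det := by
    rw [← Matrix.det_transpose, hAt]
    exact isUnit_oneSub M hM0 hMrow
  refine ⟨hdet, fun i j => ?_⟩
  have hinv : (Amat L αL z)⁻¹ i j = ((Amat L αL z)ᵀ)⁻¹ j i := by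
    rw [← Matrix.transpose_nonsing_inv, Matrix.transpose_apply]
  rw [hinv, hAt]
  exact inv_oneSub_nonneg M hM0 hMrow j i


lemma Psi_eq_Fmap (L : Matrix (Fin n) (Fin (n + 1)) ℝ) (αx αL : ℝ) (x V : Fin n → ℝ)
    (hp : ∀ j, 0 < pbar L j) (hP1 : ∀ j, 0 ≤ pbar L j + V j) (i : Fin n) :
    Psi L αx αL x V i = Fmap L αx αL x (fun j => if V j < 0 then 1 else 0) V i := by
  have hsum : ∀ j, max (pbar L j - max (-(V j)) 0) 0
      = pbar L j + (if V j < 0 then 1 else 0) * V j := by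
    intro j
    by_cases h : V j < 0
    · rw [if_pos h, max_eq_left (by linarith : (0:ℝ) ≤ -(V j)),
        max_eq_left (by have := hP1 j; linarith)]
      ring
    · push_neg at h
      rw [if_neg (not_lt.mpr h), max_eq_right (by linarith : -(V j) ≤ 0),
        max_eq_left (by have := hp j; linarith)]
      ring
  unfold Psi Fmap
  simp only [hsum]
  by_cases h : 0 ≤ V i
  · rw [if_pos h, if_neg (not_lt.mpr h)]
    ring
  · rw [if_neg h, if_pos (lt_of_not_ge h)]
    ring

lemma Fle (L : Matrix (Fin n) (Fin (n + 1)) ℝ) (αx αL : ℝ)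
    (hαx : αx ∈ Set.Icc (0 : ℝ) 1) (hαL : αL ∈ Set.Icc (0 : ℝ) 1)
    (x : Fin n → ℝ) (hx : ∀ i, 0 ≤ x i) (hπ : ∀ i j, 0 ≤ relLiab L i j)
    (z z' V : Fin n → ℝ) (hz : ∀ i, z i = 0 ∨ z i = 1) (hz' : ∀ i, z' i = 0 ∨ z' i = 1)
    (hle : ∀ i, z i ≤ z' i) (hneg : ∀ j, z j < z' j → V j ≤ 0)
    (hpz : ∀ j, 0 ≤ pbar L j + z j * V j) (hpz' : ∀ j, 0 ≤ pbar L j + z' j * V j)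
    (i : Fin n) : Fmap L αx αL x z' V i ≤ Fmap L αx αL x z V i := by
  unfold Fmap
  have ha := hαx.1; have ha' := hαx.2; have hc := hαL.1; have hc' := hαL.2
  have hz01 : ∀ j, 0 ≤ z j ∧ z j ≤ 1 := fun j => by rcases hz j with h | h <;> simp [h]
  have hz01' : ∀ j, 0 ≤ z' j ∧ z' j ≤ 1 := fun j => by rcases hz' j with h | h <;> simp [h]
  have hterm1 : (1 - (1 - αx) * z' i) * x i ≤ (1 - (1 - αx) * z i) * x i := by
    have : (1 - αx) * z i ≤ (1 - αx) * z' i :=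
      mul_le_mul_of_nonneg_left (hle i) (by linarith)
    exact mul_le_mul_of_nonneg_right (by linarith) (hx i)
  have hS' : 0 ≤ ∑ j, relLiab L j i * (pbar L j + z' j * V j) :=
    Finset.sum_nonneg fun j _ => mul_nonneg (hπ j i) (hpz' j)
  have hSS : (∑ j, relLiab L j i * (pbar L j + z' j * V j))
      ≤ ∑ j, relLiab L j i * (pbar L j + z j * V j) := by
    refine Finset.sum_le_sum fun j _ => mul_le_mul_of_nonneg_left ?_ (hπ j i)
    rcases lt_or_eq_of_le (hle j) with h | h
    · have hV := hneg j h
      rcases hz j with h0 | h0 <;> rcases hz' j with h1 | h1 <;>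
        rw [h0, h1] <;> rw [h0, h1] at h <;> first | linarith | nlinarith
    · rw [h]
  have hcoef : 0 ≤ 1 - (1 - αL) * z' i ∧ 1 - (1 - αL) * z' i ≤ 1 - (1 - αL) * z i := by
    constructor
    · rcases hz' i with h | h <;> rw [h] <;> nlinarith
    · have : (1 - αL) * z i ≤ (1 - αL) * z' i :=
        mul_le_mul_of_nonneg_left (hle i) (by linarith)
      linarith
  have hterm2 : (1 - (1 - αL) * z' i) * (∑ j, relLiab L j i * (pbar L j + z' j * V j))
      ≤ (1 - (1 - αL) * z i) * (∑ j, relLiab L j i * (pbar L j + z j * V j)) := by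
    refine mul_le_mul hcoef.2 hSS hS' ?_
    have := hcoef.1; linarith [hcoef.2]
  linarith

end FDA

/-- The fictitious default algorithm: under the regularity assumption, the iteration
`V⁽⁰⁾ = x + Πᵀ p̄ − p̄`, `z⁽ᵏ⁾ = 1_{V⁽ᵏ⁻¹⁾ < 0}`,
`V⁽ᵏ⁾ = (I − (I − (1−α_L)Λ_k)Πᵀ Λ_k)⁻¹ [(I − (1−α_x)Λ_k)x + (I − (1−α_L)Λ_k)Πᵀ p̄ − p̄]`
terminates in at most `n+1` steps (i.e. `z⁽ᵏ⁾ = z⁽ᵏ⁻¹⁾` for some `k ≤ n+1`), and at the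
first such `k` the vector `V⁽ᵏ⁻¹⁾` is the greatest fixed point of `Ψ_x`. -/
theorem fictitious_default_algorithm (n : ℕ) (hn : 1 ≤ n)
    (L : Matrix (Fin n) (Fin (n + 1)) ℝ)
    (hL : ∀ i j, 0 ≤ L i j) (hLdiag : ∀ i : Fin n, L i i.castSucc = 0)
    (αx αL : ℝ) (hαx : αx ∈ Set.Icc (0 : ℝ) 1) (hαL : αL ∈ Set.Icc (0 : ℝ) 1)
    (hreg : ∀ i, 0 < pbar L i ∧ ∑ j, relLiab L i j < 1)
    (x : Fin n → ℝ) (hx : ∀ i, 0 ≤ x i)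
    (Vs Zs : ℕ → Fin n → ℝ)
    (hV0 : Vs 0 = fun i => x i + ∑ j, relLiab L j i * pbar L j - pbar L i)
    (hZ0 : Zs 0 = 0)
    (hZ : ∀ k, Zs (k + 1) = fun i => if Vs k i < 0 then 1 else 0)
    (hVk : ∀ k, Vs (k + 1) = (Amat L αL (Zs (k + 1)))⁻¹ *ᵥ
      ((((1 : Matrix (Fin n) (Fin n) ℝ) - (1 - αx) • Matrix.diagonal (Zs (k + 1))) *ᵥ x)
        + (((1 : Matrix (Fin n) (Fin n) ℝ) - (1 - αL) • Matrix.diagonal (Zs (k + 1)))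
            *ᵥ ((PiMat L)ᵀ *ᵥ pbar L))
        - pbar L)) :
    (∃ k, 1 ≤ k ∧ k ≤ n + 1 ∧ Zs k = Zs (k - 1)) ∧
    (∀ k, 1 ≤ k → Zs k = Zs (k - 1) →
      (∀ m, 1 ≤ m → m < k → Zs m ≠ Zs (m - 1)) →
      IsGreatest {V | Psi L αx αL x V = V} (Vs (k - 1))) := by
  classical
  have hp : ∀ i, 0 < pbar L i := fun i => (hreg i).1
  have hπrow : ∀ i, ∑ j, relLiab L i j < 1 := fun i => (hreg i).2
  have hπ : ∀ i j, 0 ≤ relLiab L i j := by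
    intro i j; unfold relLiab; split
    · exact div_nonneg (hL i j.castSucc) (le_of_lt (by assumption))
    · exact le_refl 0
  have h01 : ∀ k i, Zs k i = 0 ∨ Zs k i = 1 := by
    intro k i
    cases k with
    | zero => left; rw [hZ0]; rfl
    | succ m => rw [hZ m]; dsimp only; split
                · right; rfl
                · left; rfl
  have hgood : ∀ k, IsUnit (Amat L αL (Zs k)).det ∧ ∀ i j, 0 ≤ (Amat L αL (Zs k))⁻¹ i j :=
    fun k => FDA.Amat_good L αL hαL hπ hπrow (Zs k) (h01 k)
  have hAb : ∀ k, Amat L αL (Zs (k+1)) *ᵥ Vs (k+1) = FDA.bvec L αx αL x (Zs (k+1)) := by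
    intro k
    rw [hVk k, Matrix.mulVec_mulVec, Matrix.mul_nonsing_inv _ (hgood (k+1)).1,
      Matrix.one_mulVec]
    rfl
  have hZ1 : ∀ k j, Zs (k+1) j = 1 → Vs k j < 0 := by
    intro k j h; rw [hZ k] at h; dsimp only at h
    by_contra h'; rw [if_neg h'] at h; norm_num at h
  have hZneg : ∀ k j, Vs k j < 0 → Zs (k+1) j = 1 := by
    intro k j h; rw [hZ k]; dsimp only; rw [if_pos h]
  have hFrel : ∀ k i, Vs k i = FDA.Fmap L αx αL x (Zs k) (Vs k) i := by
    intro k i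
    cases k with
    | zero =>
      rw [hV0, hZ0]
      simp only [FDA.Fmap, Pi.zero_apply, mul_zero, zero_mul, sub_zero, add_zero, one_mul]
    | succ m =>
      have hk := FDA.key L αx αL x (Zs (m+1)) (Vs (m+1)) i
      have h2 := congrFun (hAb m) i
      rw [h2] at hk
      linarith
  have hF0 : ∀ (W : Fin n → ℝ) i, FDA.Fmap L αx αL x (Zs 0) W i = Vs 0 i := by
    intro W i
    rw [hV0, hZ0]
    simp only [FDA.Fmap, Pi.zero_apply, mul_zero, zero_mul, sub_zero, add_zero, one_mul]
  have hP1 : ∀ k i, 0 ≤ pbar L i + Vs k i := by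
    intro k i
    cases k with
    | zero =>
      rw [hV0]
      have hs : 0 ≤ ∑ j, relLiab L j i * pbar L j :=
        Finset.sum_nonneg fun j _ => mul_nonneg (hπ j i) (hp j).le
      dsimp only
      linarith [hx i]
    | succ m =>
      have hc1 : ∀ l, 0 ≤ 1 - (1 - αx) * Zs (m+1) l := by
        intro l; rcases h01 (m+1) l with h|h <;> rw [h] <;> nlinarith [hαx.1, hαx.2]
      have hc2 : ∀ l, 0 ≤ 1 - (1 - αL) * Zs (m+1) l := by
        intro l; rcases h01 (m+1) l with h|h <;> rw [h] <;> nlinarith [hαL.1, hαL.2]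
      have hAy : ∀ l, (Amat L αL (Zs (m+1)) *ᵥ (0 : Fin n → ℝ)) l
          ≤ (Amat L αL (Zs (m+1)) *ᵥ (pbar L + Vs (m+1))) l := by
        intro l
        rw [Matrix.mulVec_zero, Matrix.mulVec_add]
        have e1 := congrFun (hAb m) l
        rw [Pi.add_apply, e1, FDA.Amat_mulVec, FDA.bvec_apply]
        have hsum : (∑ j, relLiab L j l * pbar L j)
            - (∑ j, relLiab L j l * (Zs (m+1) j * pbar L j))
            = ∑ j, relLiab L j l * ((1 - Zs (m+1) j) * pbar L j) := by
          rw [← Finset.sum_sub_distrib]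
          exact Finset.sum_congr rfl fun j _ => by ring
        have hkey : (1 - (1 - αL) * Zs (m+1) l) * (∑ j, relLiab L j l * pbar L j)
            - (1 - (1 - αL) * Zs (m+1) l) * (∑ j, relLiab L j l * (Zs (m+1) j * pbar L j))
            = (1 - (1 - αL) * Zs (m+1) l)
                * (∑ j, relLiab L j l * ((1 - Zs (m+1) j) * pbar L j)) := by
          rw [← mul_sub, hsum]
        have t1 : 0 ≤ (1 - (1 - αx) * Zs (m+1) l) * x l := mul_nonneg (hc1 l) (hx l)
        have t2 : 0 ≤ (1 - (1 - αL) * Zs (m+1) l)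
            * (∑ j, relLiab L j l * ((1 - Zs (m+1) j) * pbar L j)) := by
          refine mul_nonneg (hc2 l) (Finset.sum_nonneg fun j _ => mul_nonneg (hπ j l)
            (mul_nonneg ?_ (hp j).le))
          rcases h01 (m+1) j with h|h <;> rw [h] <;> norm_num
        simp only [Pi.zero_apply]
        linarith [t1, t2, hkey]
      have := FDA.sol_le (Amat L αL (Zs (m+1))) (hgood (m+1)).1 (hgood (m+1)).2
        (0 : Fin n → ℝ) (pbar L + Vs (m+1)) hAy i
      simpa using this
  have hVmono : ∀ k i, Vs (k+1) i ≤ Vs k i := by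
    intro k
    induction k with
    | zero =>
      intro i
      refine FDA.sol_le _ (hgood 1).1 (hgood 1).2 (Vs 1) (Vs 0) (fun l => ?_) i
      rw [congrFun (hAb 0) l]
      have hk := FDA.key L αx αL x (Zs 1) (Vs 0) l
      have hF : FDA.Fmap L αx αL x (Zs 1) (Vs 0) l ≤ FDA.Fmap L αx αL x (Zs 0) (Vs 0) l := by
        refine FDA.Fle L αx αL hαx hαL x hx hπ (Zs 0) (Zs 1) (Vs 0) (h01 0) (h01 1)
          ?_ ?_ ?_ ?_ l
        · intro j; rw [hZ0]; rcases h01 1 j with h|h <;> rw [h] <;> norm_num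
        · intro j hj
          rcases h01 1 j with h|h
          · exfalso; rw [hZ0, h] at hj; simp at hj
          · exact (hZ1 0 j h).le
        · intro j; rw [hZ0]; simpa using (hp j).le
        · intro j; rcases h01 1 j with h|h <;> rw [h]
          · simpa using (hp j).le
          · rw [one_mul]; exact hP1 0 j
      linarith [hF, hFrel 0 l]
    | succ m ih =>
      intro i
      refine FDA.sol_le _ (hgood (m+2)).1 (hgood (m+2)).2 (Vs (m+2)) (Vs (m+1))
        (fun l => ?_) i
      rw [congrFun (hAb (m+1)) l]
      have hk := FDA.key L αx αL x (Zs (m+2)) (Vs (m+1)) l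
      have hF : FDA.Fmap L αx αL x (Zs (m+2)) (Vs (m+1)) l
          ≤ FDA.Fmap L αx αL x (Zs (m+1)) (Vs (m+1)) l := by
        refine FDA.Fle L αx αL hαx hαL x hx hπ (Zs (m+1)) (Zs (m+2)) (Vs (m+1))
          (h01 (m+1)) (h01 (m+2)) ?_ ?_ ?_ ?_ l
        · intro j
          rcases h01 (m+1) j with h|h
          · rw [h]; rcases h01 (m+2) j with h'|h' <;> rw [h'] <;> norm_num
          · rw [h, hZneg (m+1) j (lt_of_le_of_lt (ih j) (hZ1 m j h))]
        · intro j hj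
          rcases h01 (m+2) j with h|h
          · exfalso; rcases h01 (m+1) j with h'|h' <;> rw [h, h'] at hj <;> linarith
          · exact (hZ1 (m+1) j h).le
        · intro j; rcases h01 (m+1) j with h|h <;> rw [h]
          · simpa using (hp j).le
          · rw [one_mul]; exact hP1 (m+1) j
        · intro j; rcases h01 (m+2) j with h|h <;> rw [h]
          · simpa using (hp j).le
          · rw [one_mul]; exact hP1 (m+1) j
      linarith [hF, hFrel (m+1) l]
  have hstab : ∀ k j, Zs k j = 1 → Zs (k+1) j = 1 := by
    intro k j h
    cases k with
    | zero => exfalso; rw [hZ0] at h; simp at h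
    | succ m => exact hZneg (m+1) j (lt_of_le_of_lt (hVmono m j) (hZ1 m j h))
  have hterm : ∃ k, 1 ≤ k ∧ k ≤ n + 1 ∧ Zs k = Zs (k - 1) := by
    by_contra hcon
    push_neg at hcon
    have hcard : ∀ k, k ≤ n + 1 →
        k ≤ (Finset.univ.filter (fun i => Zs k i = 1)).card := by
      intro k
      induction k with
      | zero => intro _; exact Nat.zero_le _
      | succ m ihm =>
        intro hm
        have hm' : m ≤ n + 1 := le_trans (Nat.le_succ m) hm
        have hsub : (Finset.univ.filter (fun i => Zs m i = 1))
            ⊆ (Finset.univ.filter (fun i => Zs (m+1) i = 1)) := by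
          intro j hj
          simp only [Finset.mem_filter, Finset.mem_univ, true_and] at *
          exact hstab m j hj
        have hne : Zs (m+1) ≠ Zs m := by
          have := hcon (m+1) (Nat.le_add_left 1 m) hm
          simpa using this
        have hssub : (Finset.univ.filter (fun i => Zs m i = 1))
            ⊂ (Finset.univ.filter (fun i => Zs (m+1) i = 1)) := by
          rw [Finset.ssubset_def]
          refine ⟨hsub, fun hsub2 => hne (funext fun j => ?_)⟩
          rcases h01 (m+1) j with h1|h1
          · rcases h01 m j with h2|h2
            · rw [h1, h2]
            · exfalso
              have hjm : j ∈ Finset.univ.filter (fun i => Zs (m+1) i = 1) :=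
                hsub (by simp only [Finset.mem_filter, Finset.mem_univ, true_and]; exact h2)
              simp only [Finset.mem_filter, Finset.mem_univ, true_and] at hjm
              rw [h1] at hjm; norm_num at hjm
          · have hjm : j ∈ Finset.univ.filter (fun i => Zs m i = 1) :=
              hsub2 (by simp only [Finset.mem_filter, Finset.mem_univ, true_and]; exact h1)
            simp only [Finset.mem_filter, Finset.mem_univ, true_and] at hjm
            rw [h1, hjm]
        have := Finset.card_lt_card hssub
        have := ihm hm'
        omega
    have h1 := hcard (n+1) le_rfl
    have h2 : (Finset.univ.filter (fun i => Zs (n+1) i = 1)).card ≤ n := by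
      calc (Finset.univ.filter (fun i => Zs (n+1) i = 1)).card
          ≤ Finset.univ.card := Finset.card_filter_le _ _
        _ = n := by rw [Finset.card_univ, Fintype.card_fin]
    omega
  refine ⟨hterm, ?_⟩
  intro k hk1 hkeq _hfirst
  cases k with
  | zero => omega
  | succ m =>
    simp only [Nat.add_sub_cancel] at hkeq ⊢
    have hfix : Psi L αx αL x (Vs m) = Vs m := by
      funext i
      have hPF := FDA.Psi_eq_Fmap L αx αL x (Vs m) hp (hP1 m) i
      rw [← hZ m] at hPF
      rw [hPF, hkeq]
      exact (hFrel m i).symm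
    refine ⟨hfix, ?_⟩
    rintro V hV
    have hVlb : ∀ j, 0 ≤ pbar L j + V j := by
      intro j
      have hVj : V j = Psi L αx αL x V j := (congrFun hV j).symm
      have hsumnn : 0 ≤ ∑ l, relLiab L l j * max (pbar L l - max (-(V l)) 0) 0 :=
        Finset.sum_nonneg fun l _ => mul_nonneg (hπ l j) (le_max_right _ _)
      rw [hVj]; unfold Psi
      split
      · linarith [hx j]
      · nlinarith [hαx.1, hx j, mul_nonneg hαx.1 (hx j), mul_nonneg hαL.1 hsumnn]
    have hGF : ∀ i, V i
        = FDA.Fmap L αx αL x (fun j => if V j < 0 then 1 else 0) V i := fun i =>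
      (congrFun hV i).symm.trans (FDA.Psi_eq_Fmap L αx αL x V hp hVlb i)
    have hzV01 : ∀ j, (fun j => if V j < 0 then (1:ℝ) else 0) j = 0
        ∨ (fun j => if V j < 0 then (1:ℝ) else 0) j = 1 := by
      intro j; by_cases h : V j < 0 <;> simp [h]
    have hpzV : ∀ j, 0 ≤ pbar L j + (fun j => if V j < 0 then (1:ℝ) else 0) j * V j := by
      intro j; dsimp only; by_cases h : V j < 0
      · rw [if_pos h, one_mul]; exact hVlb j
      · rw [if_neg h]; simpa using (hp j).le
    have hmain : ∀ m' i, V i ≤ Vs m' i := by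
      intro m'
      induction m' with
      | zero =>
        intro i
        have hF := FDA.Fle L αx αL hαx hαL x hx hπ (Zs 0)
          (fun j => if V j < 0 then 1 else 0) V (h01 0) hzV01
          ?_ ?_ ?_ hpzV i
        · rw [hF0 V i] at hF
          linarith [hGF i, hF]
        · intro j; rw [hZ0]; by_cases h : V j < 0 <;> simp [h]
        · intro j hj
          by_cases h : V j < 0
          · exact h.le
          · exfalso; rw [hZ0, if_neg h] at hj; simp at hj
        · intro j; rw [hZ0]; simpa using (hp j).le
      | succ m' ih =>
        intro i
        have hF := FDA.Fle L αx αL hαx hαL x hx hπ (Zs (m'+1))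
          (fun j => if V j < 0 then 1 else 0) V (h01 (m'+1)) hzV01
          ?_ ?_ ?_ hpzV i
        · refine FDA.sol_le _ (hgood (m'+1)).1 (hgood (m'+1)).2 V (Vs (m'+1))
            (fun l => ?_) i
          rw [congrFun (hAb m') l]
          have hk := FDA.key L αx αL x (Zs (m'+1)) V l
          have hF' := FDA.Fle L αx αL hαx hαL x hx hπ (Zs (m'+1))
            (fun j => if V j < 0 then 1 else 0) V (h01 (m'+1)) hzV01
            ?_ ?_ ?_ hpzV l
          · linarith [hGF l, hF', hk]
          · intro j
            rcases h01 (m'+1) j with h|h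
            · rw [h]; by_cases h' : V j < 0 <;> simp [h']
            · rw [h]
              have hVj : V j < 0 := lt_of_le_of_lt (ih j) (hZ1 m' j h)
              rw [if_pos hVj]
          · intro j hj
            by_cases h : V j < 0
            · exact h.le
            · exfalso; rw [if_neg h] at hj
              rcases h01 (m'+1) j with h'|h' <;> rw [h'] at hj <;> linarith
          · intro j; rcases h01 (m'+1) j with h|h <;> rw [h]
            · simpa using (hp j).le
            · rw [one_mul]; exact hVlb j
        · intro j
          rcases h01 (m'+1) j with h|h
          · rw [h]; by_cases h' : V j < 0 <;> simp [h']
          · rw [h]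
            have hVj : V j < 0 := lt_of_le_of_lt (ih j) (hZ1 m' j h)
            rw [if_pos hVj]
        · intro j hj
          by_cases h : V j < 0
          · exact h.le
          · exfalso; rw [if_neg h] at hj
            rcases h01 (m'+1) j with h'|h' <;> rw [h'] at hj <;> linarith
        · intro j; rcases h01 (m'+1) j with h|h <;> rw [h]
          · simpa using (hp j).le
          · rw [one_mul]; exact hVlb j
    exact fun i => hmain m i
end
end

section
/- In the Eisenberg–Noe setting (α_x = α_L = 1), the greatest clearing payment map p : ℝⁿ₊ → [0, p̄] is submodular: for all x, y ∈ ℝⁿ₊ and every i ≤ n, p_i(x) + p_i(y) ≥ p_i(x ∧ y) + p_i(x ∨ y), where ∧ and ∨ are the componentwise minimum and maximum. Consequently the greatest clearing wealth map V(x) = x + Πᵀ p(x) − p̄ is submodular. -/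
open Matrix BigOperators Filter Topology

noncomputable section

/-- `p` is the greatest clearing payment vector for endowments `x` in the Eisenberg–Noe
setting: the greatest fixed point of `p ↦ p̄ ∧ (x + Πᵀ p)` on `[0, p̄]`. -/
def IsGreatestClearingPayment {n : ℕ} (L : Matrix (Fin n) (Fin (n + 1)) ℝ)
    (x p : Fin n → ℝ) : Prop :=
  IsGreatest {q : Fin n → ℝ | (∀ i, 0 ≤ q i ∧ q i ≤ pbar L i) ∧
    ∀ i, q i = min (pbar L i) (x i + ∑ j, relLiab L j i * q j)} p

namespace ENsubmod

variable {n : ℕ}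

/-- One step of the Picard iteration. -/
def Phi (L : Matrix (Fin n) (Fin (n + 1)) ℝ) (x p : Fin n → ℝ) : Fin n → ℝ :=
  fun i => min (pbar L i) (x i + ∑ j, relLiab L j i * p j)

/-- Picard iteration starting from `p̄`. -/
def it (L : Matrix (Fin n) (Fin (n + 1)) ℝ) (x : Fin n → ℝ) : ℕ → Fin n → ℝ
  | 0 => fun i => pbar L i
  | k + 1 => Phi L x (it L x k)

variable {L : Matrix (Fin n) (Fin (n + 1)) ℝ}

lemma pbar_nonneg (hL : ∀ i j, 0 ≤ L i j) (i : Fin n) : 0 ≤ pbar L i :=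
  Finset.sum_nonneg fun j _ => hL i j

lemma relLiab_nonneg (hL : ∀ i j, 0 ≤ L i j) (i j : Fin n) : 0 ≤ relLiab L i j := by
  unfold relLiab
  split_ifs with h
  · exact div_nonneg (hL _ _) h.le
  · exact le_rfl

lemma Phi_mono (hL : ∀ i j, 0 ≤ L i j) {x y p q : Fin n → ℝ}
    (hxy : x ≤ y) (hpq : p ≤ q) : Phi L x p ≤ Phi L y q := by
  intro i
  refine min_le_min le_rfl (add_le_add (hxy i) ?_)
  exact Finset.sum_le_sum fun j _ =>
    mul_le_mul_of_nonneg_left (hpq j) (relLiab_nonneg hL j i)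

lemma it_succ_le (hL : ∀ i j, 0 ≤ L i j) (x : Fin n → ℝ) :
    ∀ k, it L x (k + 1) ≤ it L x k := by
  intro k
  induction k with
  | zero => exact fun i => min_le_left _ _
  | succ k ih => exact Phi_mono hL le_rfl ih

lemma it_antitone (hL : ∀ i j, 0 ≤ L i j) (x : Fin n → ℝ) (i : Fin n) :
    Antitone fun k => it L x k i :=
  antitone_nat_of_succ_le fun k => it_succ_le hL x k i

lemma it_nonneg (hL : ∀ i j, 0 ≤ L i j) {x : Fin n → ℝ} (hx : ∀ i, 0 ≤ x i) :
    ∀ k i, 0 ≤ it L x k i := by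
  intro k
  induction k with
  | zero => exact fun i => pbar_nonneg hL i
  | succ k ih =>
    intro i
    refine le_min (pbar_nonneg hL i) (add_nonneg (hx i) ?_)
    exact Finset.sum_nonneg fun j _ => mul_nonneg (relLiab_nonneg hL j i) (ih j)

lemma it_mono_x (hL : ∀ i j, 0 ≤ L i j) {x y : Fin n → ℝ} (hxy : x ≤ y) :
    ∀ k, it L x k ≤ it L y k := by
  intro k
  induction k with
  | zero => exact le_rfl
  | succ k ih => exact Phi_mono hL hxy ih

/-- Truncation by a constant preserves submodular inequalities for monotone data. -/
lemma min_submod (c0 a b c d : ℝ) (h1 : a + d ≤ b + c) (hab : a ≤ b) (hac : a ≤ c)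
    (hbd : b ≤ d) : min c0 a + min c0 d ≤ min c0 b + min c0 c := by
  simp only [min_def]
  split_ifs <;> linarith

lemma it_submod (hL : ∀ i j, 0 ≤ L i j) (x y : Fin n → ℝ) :
    ∀ k i, it L (x ⊓ y) k i + it L (x ⊔ y) k i ≤ it L x k i + it L y k i := by
  intro k
  induction k with
  | zero => intro i; exact le_rfl
  | succ k ih =>
    intro i
    have hinfx : it L (x ⊓ y) k ≤ it L x k := it_mono_x hL inf_le_left k
    have hinfy : it L (x ⊓ y) k ≤ it L y k := it_mono_x hL inf_le_right k
    have hxsup : it L x k ≤ it L (x ⊔ y) k := it_mono_x hL le_sup_left k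
    show min (pbar L i) ((x ⊓ y) i + ∑ j, relLiab L j i * it L (x ⊓ y) k j)
        + min (pbar L i) ((x ⊔ y) i + ∑ j, relLiab L j i * it L (x ⊔ y) k j)
        ≤ min (pbar L i) (x i + ∑ j, relLiab L j i * it L x k j)
        + min (pbar L i) (y i + ∑ j, relLiab L j i * it L y k j)
    apply min_submod
    · have hsum : (∑ j, relLiab L j i * it L (x ⊓ y) k j)
          + (∑ j, relLiab L j i * it L (x ⊔ y) k j)
          ≤ (∑ j, relLiab L j i * it L x k j) + (∑ j, relLiab L j i * it L y k j) := by
        rw [← Finset.sum_add_distrib, ← Finset.sum_add_distrib]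
        refine Finset.sum_le_sum fun j _ => ?_
        rw [← mul_add, ← mul_add]
        exact mul_le_mul_of_nonneg_left (ih j) (relLiab_nonneg hL j i)
      have hxy : (x ⊓ y) i + (x ⊔ y) i = x i + y i := by
        simp [Pi.inf_apply, Pi.sup_apply, min_add_max]
      linarith
    · refine add_le_add (inf_le_left (b := y) i) ?_
      exact Finset.sum_le_sum fun j _ =>
        mul_le_mul_of_nonneg_left (hinfx j) (relLiab_nonneg hL j i)
    · refine add_le_add (inf_le_right (a := x) i) ?_
      exact Finset.sum_le_sum fun j _ =>
        mul_le_mul_of_nonneg_left (hinfy j) (relLiab_nonneg hL j i)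
    · refine add_le_add (le_sup_left (b := y) i) ?_
      exact Finset.sum_le_sum fun j _ =>
        mul_le_mul_of_nonneg_left (hxsup j) (relLiab_nonneg hL j i)

/-- The Picard iteration converges to the greatest clearing payment. -/
lemma tendsto_it (hL : ∀ i j, 0 ≤ L i j) {P : (Fin n → ℝ) → (Fin n → ℝ)}
    (hP : ∀ x : Fin n → ℝ, (∀ i, 0 ≤ x i) → IsGreatestClearingPayment L x (P x))
    {x : Fin n → ℝ} (hx : ∀ i, 0 ≤ x i) (i : Fin n) :
    Tendsto (fun k => it L x k i) atTop (𝓝 (P x i)) := by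
  set Q : Fin n → ℝ := fun i => ⨅ k, it L x k i with hQ
  have hbdd : ∀ i : Fin n, BddBelow (Set.range fun k => it L x k i) := by
    intro i
    exact ⟨0, fun r ⟨k, hk⟩ => hk ▸ it_nonneg hL hx k i⟩
  have htend : ∀ i : Fin n, Tendsto (fun k => it L x k i) atTop (𝓝 (Q i)) := by
    intro i
    exact tendsto_atTop_ciInf (it_antitone hL x i) (hbdd i)
  -- Q is a fixed point
  have hQfix : ∀ i, Q i = min (pbar L i) (x i + ∑ j, relLiab L j i * Q j) := by
    intro i
    have h1 : Tendsto (fun k => it L x (k + 1) i) atTop (𝓝 (Q i)) :=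
      (htend i).comp (tendsto_add_atTop_nat 1)
    have h2 : Tendsto (fun k => it L x (k + 1) i) atTop
        (𝓝 (min (pbar L i) (x i + ∑ j, relLiab L j i * Q j))) := by
      have : Tendsto (fun k => x i + ∑ j, relLiab L j i * it L x k j) atTop
          (𝓝 (x i + ∑ j, relLiab L j i * Q j)) := by
        refine tendsto_const_nhds.add ?_
        exact tendsto_finset_sum _ fun j _ => (htend j).const_mul _
      exact (tendsto_const_nhds.min this)
    exact tendsto_nhds_unique h1 h2
  have hQmem : Q ∈ {q : Fin n → ℝ | (∀ i, 0 ≤ q i ∧ q i ≤ pbar L i) ∧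
      ∀ i, q i = min (pbar L i) (x i + ∑ j, relLiab L j i * q j)} := by
    refine ⟨fun i => ⟨?_, ?_⟩, hQfix⟩
    · exact le_ciInf fun k => it_nonneg hL hx k i
    · exact ciInf_le_of_le (hbdd i) 0 le_rfl
  have hQle : Q ≤ P x := (hP x hx).2 hQmem
  have hPle : ∀ k, P x ≤ it L x k := by
    intro k
    induction k with
    | zero => exact fun i => ((hP x hx).1.1 i).2
    | succ k ih =>
      intro i
      calc P x i = min (pbar L i) (x i + ∑ j, relLiab L j i * P x j) := (hP x hx).1.2 i
        _ ≤ it L x (k + 1) i := by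
            refine min_le_min le_rfl (add_le_add le_rfl ?_)
            exact Finset.sum_le_sum fun j _ =>
              mul_le_mul_of_nonneg_left (ih j) (relLiab_nonneg hL j i)
  have hPQ : P x i = Q i :=
    le_antisymm (le_ciInf fun k => hPle k i) (hQle i)
  rw [hPQ]
  exact htend i

end ENsubmod

/-- In the Eisenberg–Noe setting (`α_x = α_L = 1`), the greatest clearing payment map is
submodular: for all `x, y ∈ ℝⁿ₊` and every `i`,
`p_i(x) + p_i(y) ≥ p_i(x ∧ y) + p_i(x ∨ y)`.  Consequently the greatest clearing wealth map
`V(x) = x + Πᵀ p(x) − p̄` is submodular. -/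
theorem clearing_payment_submodular (n : ℕ) (hn : 1 ≤ n)
    (L : Matrix (Fin n) (Fin (n + 1)) ℝ)
    (hL : ∀ i j, 0 ≤ L i j) (hLdiag : ∀ i : Fin n, L i i.castSucc = 0)
    (P : (Fin n → ℝ) → (Fin n → ℝ))
    (hP : ∀ x : Fin n → ℝ, (∀ i, 0 ≤ x i) → IsGreatestClearingPayment L x (P x)) :
    ∀ x y : Fin n → ℝ, (∀ i, 0 ≤ x i) → (∀ i, 0 ≤ y i) → ∀ i : Fin n,
      (P (x ⊓ y) i + P (x ⊔ y) i ≤ P x i + P y i)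
      ∧ (((x ⊓ y) i + ∑ j, relLiab L j i * P (x ⊓ y) j - pbar L i)
          + ((x ⊔ y) i + ∑ j, relLiab L j i * P (x ⊔ y) j - pbar L i)
          ≤ (x i + ∑ j, relLiab L j i * P x j - pbar L i)
            + (y i + ∑ j, relLiab L j i * P y j - pbar L i)) := by
  intro x y hx hy
  have hinf : ∀ i, 0 ≤ (x ⊓ y) i := fun i => le_min (hx i) (hy i)
  have hsup : ∀ i, 0 ≤ (x ⊔ y) i := fun i => le_trans (hx i) (le_max_left _ _)
  have key : ∀ i : Fin n, P (x ⊓ y) i + P (x ⊔ y) i ≤ P x i + P y i := by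
    intro i
    have h1 := (ENsubmod.tendsto_it hL hP hinf i).add (ENsubmod.tendsto_it hL hP hsup i)
    have h2 := (ENsubmod.tendsto_it hL hP hx i).add (ENsubmod.tendsto_it hL hP hy i)
    exact le_of_tendsto_of_tendsto' h1 h2 fun k => ENsubmod.it_submod hL x y k i
  intro i
  refine ⟨key i, ?_⟩
  have hxy : (x ⊓ y) i + (x ⊔ y) i = x i + y i := by
    simp [Pi.inf_apply, Pi.sup_apply, min_add_max]
  have hsum : (∑ j, relLiab L j i * P (x ⊓ y) j) + (∑ j, relLiab L j i * P (x ⊔ y) j)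
      ≤ (∑ j, relLiab L j i * P x j) + (∑ j, relLiab L j i * P y j) := by
    rw [← Finset.sum_add_distrib, ← Finset.sum_add_distrib]
    refine Finset.sum_le_sum fun j _ => ?_
    rw [← mul_add, ← mul_add]
    exact mul_le_mul_of_nonneg_left (key j) (ENsubmod.relLiab_nonneg hL j i)
  linarith
end
end

section
/- In the Eisenberg–Noe setting (α_x = α_L = 1) under the regularity assumption (p̄_i > 0 and Σ_{j=1}^n π_{ij} < 1 for every i ≤ n), for every x ∈ ℝⁿ₊: (i) the equity of each bank satisfies V_i(x)⁺ = x_i + Σ_{j=1}^n π_{ji} p_j(x) − p_i(x) for every i ≤ n; and (ii) total equity is conserved: Σ_{i=1}^n V_i(x)⁺ + Σ_{j=1}^n (1 − Σ_{k=1}^n π_{jk}) p_j(x) = Σ_{i=1}^n x_i, i.e., the sum of the bank equities and the payments received by the societal node equals the total bank endowments. -/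
open Matrix BigOperators

noncomputable section

/-- In the Eisenberg–Noe setting under the regularity assumption, for every `x ∈ ℝⁿ₊`:
(i) `V_i(x)⁺ = x_i + Σ_j π_{ji} p_j(x) − p_i(x)` for every bank `i`; and (ii) total equity is
conserved: `Σ_i V_i(x)⁺ + Σ_j (1 − Σ_k π_{jk}) p_j(x) = Σ_i x_i`. -/
theorem equity_formula_and_conservation (n : ℕ) (hn : 1 ≤ n)
    (L : Matrix (Fin n) (Fin (n + 1)) ℝ)
    (hL : ∀ i j, 0 ≤ L i j) (hLdiag : ∀ i : Fin n, L i i.castSucc = 0)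
    (hreg : ∀ i, 0 < pbar L i ∧ ∑ j, relLiab L i j < 1)
    (x : Fin n → ℝ) (hx : ∀ i, 0 ≤ x i)
    (p : Fin n → ℝ) (hp : IsGreatestClearingPayment L x p) :
    (∀ i, max (x i + (∑ j, relLiab L j i * p j) - pbar L i) 0
        = x i + (∑ j, relLiab L j i * p j) - p i)
    ∧ (∑ i, max (x i + (∑ j, relLiab L j i * p j) - pbar L i) 0)
        + (∑ j, (1 - ∑ k, relLiab L j k) * p j) = ∑ i, x i := by

  obtain ⟨⟨hbd, hfix⟩, -⟩ := hp
  have hmain : ∀ i, max (x i + (∑ j, relLiab L j i * p j) - pbar L i) 0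
      = x i + (∑ j, relLiab L j i * p j) - p i := by
    intro i
    have hfi := hfix i
    rcases le_total (pbar L i) (x i + ∑ j, relLiab L j i * p j) with h | h
    · rw [min_eq_left h] at hfi
      rw [hfi, max_eq_left (by linarith)]
    · rw [min_eq_right h] at hfi
      rw [hfi, max_eq_right (by linarith)]
      ring
  refine ⟨hmain, ?_⟩
  rw [Finset.sum_congr rfl fun i _ => hmain i]
  have hswap : ∑ i, ∑ j, relLiab L j i * p j
      = ∑ j : Fin n, (∑ k, relLiab L j k) * p j := by
    rw [Finset.sum_comm]
    exact Finset.sum_congr rfl fun j _ => (Finset.sum_mul _ _ _).symm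
  simp only [Finset.sum_add_distrib, Finset.sum_sub_distrib, hswap, sub_mul, one_mul]
  ring
end
end
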